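/- Let k ∈ ℤ and let f : ℍ → ℂ be holomorphic, with iterated Shimura–Maass derivatives ∂^n f (base weight k). Then for every n ≥ 0 and every z ∈ ℍ, the normalized ordinary derivative is recovered by f^{(n)}(z)/(2πi)^n = Σ_{r=0}^{n} (−1)^{n−r} · C(n,r) · (k+r)_{n−r} / (−4π·Im z)^{n−r} · (∂^r f)(z). -/

import Mathlib

open Complex

/-- The Wirtinger derivative `∂_z = (1/2)(∂/∂x − i ∂/∂y)` of `f : ℂ → ℂ` at `z`. -/
noncomputable def wirtingerDeriv (f : ℂ → ℂ) (z : ℂ) : ℂ :=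
  (1 / 2) * (fderiv ℝ f z 1 - Complex.I * fderiv ℝ f z Complex.I)

/-- The iterated Shimura–Maass derivative `∂^n f` of base weight `k`. -/
noncomputable def smIter (k : ℤ) (f : ℂ → ℂ) : ℕ → ℂ → ℂ
  | 0 => f
  | n + 1 => fun z => (1 / (2 * (Real.pi : ℂ) * Complex.I)) *
      (wirtingerDeriv (smIter k f n) z +
        ((k : ℂ) + 2 * n) * smIter k f n z / (z - (starRingEnd ℂ) z))

/-! With `Y z = -4π Im z` one has `∂_z Y = 2πi` and `2πi (z - z̄) = Y`, so the recursion reads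
`∂_z (∂^n f) = 2πi (∂^{n+1} f - (k + 2n) ∂^n f / Y)`. For holomorphic `f`,
`f^{(n+1)} = ∂_z f^{(n)}`; differentiating `f^{(n)} = (2πi)^n Σ_r a(n,r) Y^{r-n} ∂^r f` term by
term with the Leibniz rule and this recursion shows that the coefficients must satisfy
`a(n+1, r+1) = a(n, r) - (k + n + r + 1) a(n, r+1)`, and `a(n,r) = (-1)^{n-r} C(n,r) (k+r)_{n-r}`
does, by Pascal's rule and `(r+1) C(n,r+1) = (n-r) C(n,r)`. The Leibniz rule needs the `∂^r f` to
be smooth, which holds by induction since Wirtinger derivatives of smooth functions are smooth. -/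

open Real Finset
open scoped ContDiff

section Wirtinger

variable {f g : ℂ → ℂ} {z : ℂ}

theorem Filter.EventuallyEq.wirtingerDeriv_eq (h : f =ᶠ[nhds z] g) :
    wirtingerDeriv f z = wirtingerDeriv g z := by
  rw [wirtingerDeriv, h.fderiv_eq, wirtingerDeriv]

theorem DifferentiableAt.wirtingerDeriv_eq_deriv (h : DifferentiableAt ℂ f z) :
    wirtingerDeriv f z = deriv f z := by
  have hI : fderiv ℂ f z I = I * deriv f z := by simp
  rw [wirtingerDeriv, h.fderiv_restrictScalars ℝ]
  simp only [ContinuousLinearMap.coe_restrictScalars', fderiv_apply_one_eq_deriv, hI]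
  linear_combination (-deriv f z / 2) * I_sq

theorem wirtingerDeriv_mul (hf : DifferentiableAt ℝ f z) (hg : DifferentiableAt ℝ g z) :
    wirtingerDeriv (fun w => f w * g w) z
      = wirtingerDeriv f z * g z + f z * wirtingerDeriv g z := by
  simp only [wirtingerDeriv, fderiv_fun_mul hf hg, add_apply,
    FunLike.coe_smul, Pi.smul_apply, smul_eq_mul]
  ring

theorem wirtingerDeriv_const_mul (c : ℂ) (hg : DifferentiableAt ℝ g z) :
    wirtingerDeriv (fun w => c * g w) z = c * wirtingerDeriv g z := by
  simp only [wirtingerDeriv, fderiv_const_mul hg c, FunLike.coe_smul,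
    Pi.smul_apply, smul_eq_mul]
  ring

theorem wirtingerDeriv_sum {ι : Type*} {s : Finset ι} {F : ι → ℂ → ℂ}
    (h : ∀ i ∈ s, DifferentiableAt ℝ (F i) z) :
    wirtingerDeriv (fun w => ∑ i ∈ s, F i w) z = ∑ i ∈ s, wirtingerDeriv (F i) z := by
  simp only [wirtingerDeriv, fderiv_fun_sum h, FunLike.coe_sum, Finset.sum_apply,
    Finset.mul_sum, ← Finset.sum_sub_distrib]

theorem wirtingerDeriv_comp {φ : ℂ → ℂ} (hφ : DifferentiableAt ℂ φ (g z))
    (hg : DifferentiableAt ℝ g z) :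
    wirtingerDeriv (fun w => φ (g w)) z = deriv φ (g z) * wirtingerDeriv g z := by
  have hφ' := (hφ.hasDerivAt.hasFDerivAt.restrictScalars ℝ).comp z hg.hasFDerivAt
  change wirtingerDeriv (φ ∘ g) z = _
  simp only [wirtingerDeriv, hφ'.fderiv, ContinuousLinearMap.comp_apply,
    ContinuousLinearMap.coe_restrictScalars', ContinuousLinearMap.toSpanSingleton_apply,
    smul_eq_mul]
  ring

theorem wirtingerDeriv_im : wirtingerDeriv (fun w => (w.im : ℂ)) z = -I / 2 := by
  have h : HasFDerivAt (fun w : ℂ => (w.im : ℂ)) (ofRealCLM.comp imCLM) z :=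
    (ofRealCLM.comp imCLM).hasFDerivAt
  simp only [wirtingerDeriv, h.fderiv, ContinuousLinearMap.comp_apply, imCLM_apply, one_im,
    ofRealCLM_apply, ofReal_zero, I_im, ofReal_one]
  ring

end Wirtinger

noncomputable def negFourPiIm (z : ℂ) : ℂ := -4 * π * z.im

theorem two_pi_I_mul_sub_conj (z : ℂ) : 2 * π * I * (z - (starRingEnd ℂ) z) = negFourPiIm z := by
  rw [sub_conj, negFourPiIm]
  push_cast
  linear_combination (4 * π * z.im : ℂ) * I_sq

theorem sub_conj_ne_zero {z : ℂ} (hz : z.im ≠ 0) : z - (starRingEnd ℂ) z ≠ 0 := by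
  simpa [sub_conj, I_ne_zero] using hz

theorem negFourPiIm_ne_zero {z : ℂ} (hz : z.im ≠ 0) : negFourPiIm z ≠ 0 := by
  simp [negFourPiIm, Real.pi_ne_zero, hz]

theorem differentiable_negFourPiIm : Differentiable ℝ negFourPiIm :=
  ((ofRealCLM.comp imCLM).differentiable).const_mul _

theorem wirtingerDeriv_negFourPiIm (z : ℂ) : wirtingerDeriv negFourPiIm z = 2 * π * I := by
  rw [show negFourPiIm = fun w => -4 * π * (w.im : ℂ) from rfl,
    wirtingerDeriv_const_mul (g := fun w => (w.im : ℂ)) _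
      (ofRealCLM.comp imCLM).differentiableAt, wirtingerDeriv_im]
  ring

theorem differentiableAt_negFourPiIm_zpow {z : ℂ} (hz : z.im ≠ 0) (e : ℤ) :
    DifferentiableAt ℝ (fun w => negFourPiIm w ^ e) z :=
  ((differentiableAt_zpow.2 (Or.inl (negFourPiIm_ne_zero hz))).restrictScalars ℝ).comp z
    differentiable_negFourPiIm.differentiableAt

theorem wirtingerDeriv_negFourPiIm_zpow {z : ℂ} (hz : z.im ≠ 0) (e : ℤ) :
    wirtingerDeriv (fun w => negFourPiIm w ^ e) z = 2 * π * I * (e * negFourPiIm z ^ (e - 1)) := by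
  rw [wirtingerDeriv_comp (differentiableAt_zpow.2 (Or.inl (negFourPiIm_ne_zero hz)))
    differentiable_negFourPiIm.differentiableAt, deriv_zpow, wirtingerDeriv_negFourPiIm]
  ring

theorem ContDiffOn.wirtingerDeriv {g : ℂ → ℂ} {U : Set ℂ} {m n : WithTop ℕ∞}
    (hg : ContDiffOn ℝ n g U) (hU : IsOpen U) (hmn : m + 1 ≤ n) :
    ContDiffOn ℝ m (wirtingerDeriv g) U := by
  have hg' : ContDiffOn ℝ m (fderiv ℝ g) U := hg.fderiv_of_isOpen hU hmn
  exact contDiffOn_const.mul ((hg'.clm_apply contDiffOn_const).sub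
    (contDiffOn_const.mul (hg'.clm_apply contDiffOn_const)))

section SMIter

variable (k : ℤ) (f : ℂ → ℂ)

theorem wirtingerDeriv_smIter (n : ℕ) {z : ℂ} (hz : z.im ≠ 0) :
    wirtingerDeriv (smIter k f n) z
      = 2 * π * I * (smIter k f (n + 1) z - (k + 2 * n) * smIter k f n z / negFourPiIm z) := by
  have hw := sub_conj_ne_zero hz
  rw [smIter, ← two_pi_I_mul_sub_conj]
  field_simp
  ring

theorem contDiffOn_smIter {U : Set ℂ} (hU : IsOpen U) (hU₀ : ∀ z ∈ U, z.im ≠ 0)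
    (hf : DifferentiableOn ℂ f U) (n : ℕ) : ContDiffOn ℝ ∞ (smIter k f n) U := by
  induction n with
  | zero => exact (hf.contDiffOn hU).restrict_scalars ℝ
  | succ n ih =>
    have hw : ContDiffOn ℝ ∞ (fun z : ℂ => z - (starRingEnd ℂ) z) U :=
      contDiffOn_id.sub conjCLE.contDiff.contDiffOn
    simp only [smIter, div_eq_mul_inv]
    refine contDiffOn_const.mul ((ih.wirtingerDeriv hU le_rfl).add
      ((contDiffOn_const.mul ih).mul (hw.inv fun z hz => sub_conj_ne_zero (hU₀ z hz))))

end SMIter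

section Coeff

variable {R : Type*} [CommRing R]

noncomputable def smCoeff (x : R) (n r : ℕ) : R :=
  (-1) ^ (n - r) * n.choose r * (ascPochhammer R (n - r)).eval (x + r)

theorem smCoeff_of_lt (x : R) {n r : ℕ} (h : n < r) : smCoeff x n r = 0 := by
  simp [smCoeff, Nat.choose_eq_zero_of_lt h]

theorem smCoeff_succ_zero (x : R) (n : ℕ) : smCoeff x (n + 1) 0 = -(x + n) * smCoeff x n 0 := by
  simp only [smCoeff, Nat.sub_zero, Nat.choose_zero_right, Nat.cast_zero, add_zero,
    ascPochhammer_succ_eval, pow_succ]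
  ring

theorem smCoeff_succ_succ (x : R) (n r : ℕ) :
    smCoeff x (n + 1) (r + 1) = smCoeff x n r - (x + n + r + 1) * smCoeff x n (r + 1) := by
  rcases lt_or_ge r n with hr | hr
  · obtain ⟨m, rfl⟩ := Nat.exists_eq_add_of_lt hr
    have hpascal : ((r + m + 1 + 1).choose (r + 1) : R)
        = (r + m + 1).choose r + (r + m + 1).choose (r + 1) := by
      rw [Nat.choose_succ_succ, Nat.cast_add]
    have habsorb : ((r + m + 1).choose (r + 1) : R) * (r + 1) = (r + m + 1).choose r * (m + 1) := by
      have := congrArg (Nat.cast : ℕ → R) (Nat.choose_succ_right_eq (r + m + 1) r)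
      rw [show r + m + 1 - r = m + 1 by omega] at this
      push_cast at this
      exact this
    have hleft : (ascPochhammer R (m + 1)).eval (x + r)
        = (x + r) * (ascPochhammer R m).eval (x + r + 1) := by
      simp [ascPochhammer_succ_left, Polynomial.eval_comp, add_assoc]
    simp only [smCoeff, show r + m + 1 + 1 - (r + 1) = m + 1 by omega,
      show r + m + 1 - r = m + 1 by omega, show r + m + 1 - (r + 1) = m by omega,
      hpascal, pow_succ]
    push_cast
    rw [hleft, ← add_assoc, ascPochhammer_succ_eval]
    linear_combination (-1) ^ m * (ascPochhammer R m).eval (x + r + 1) * habsorb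
  · simp [smCoeff, Nat.sub_eq_zero_of_le hr, Nat.choose_eq_zero_of_lt (Nat.lt_succ_of_le hr),
      Nat.choose_succ_succ]

end Coeff

theorem sum_smCoeff_succ {K : Type*} [Field K] (x y : K) (g : ℕ → K) (n : ℕ) :
    ∑ r ∈ range (n + 1 + 1), smCoeff x (n + 1) r * (y ^ ((r : ℤ) - (n + 1 : ℕ)) * g r) =
      ∑ r ∈ range (n + 1), smCoeff x n r *
        (-(x + n + r) * y ^ ((r : ℤ) - n - 1) * g r + y ^ ((r : ℤ) - n) * g (r + 1)) := by
  set S : ℕ → K := fun r => -(x + n + r) * smCoeff x n r * y ^ ((r : ℤ) - n - 1) * g r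
  set T : ℕ → K := fun r => smCoeff x n r * y ^ ((r : ℤ) - n) * g (r + 1)
  have hS : S (n + 1) = 0 := by simp [S, smCoeff_of_lt x (Nat.lt_succ_self n)]
  calc _ = S 0 + ∑ r ∈ range (n + 1), (S (r + 1) + T r) := by
        rw [sum_range_succ', add_comm]
        congr 1
        · simp only [S, smCoeff_succ_zero]
          push_cast
          ring_nf
        · refine sum_congr rfl fun r _ => ?_
          simp only [S, T, smCoeff_succ_succ]
          push_cast
          ring_nf
    _ = ∑ r ∈ range (n + 1 + 1), S r + ∑ r ∈ range (n + 1), T r := by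
        rw [sum_add_distrib, sum_range_succ' S]
        ring
    _ = _ := by
        rw [sum_range_succ S, hS, add_zero, ← sum_add_distrib]
        refine sum_congr rfl fun r _ => ?_
        simp only [S, T]
        ring

section Inverse

variable {k : ℤ} {f : ℂ → ℂ}

theorem wirtingerDeriv_zpow_mul_smIter {z : ℂ} (hz : z.im ≠ 0) (e : ℤ) {r : ℕ}
    (hg : DifferentiableAt ℝ (smIter k f r) z) :
    wirtingerDeriv (fun w => negFourPiIm w ^ e * smIter k f r w) z
      = 2 * π * I * ((e - (k + 2 * r)) * negFourPiIm z ^ (e - 1) * smIter k f r z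
          + negFourPiIm z ^ e * smIter k f (r + 1) z) := by
  have hY := negFourPiIm_ne_zero hz
  rw [wirtingerDeriv_mul (differentiableAt_negFourPiIm_zpow hz e) hg,
    wirtingerDeriv_negFourPiIm_zpow hz, wirtingerDeriv_smIter k f r hz, zpow_sub_one₀ hY]
  field_simp
  ring

theorem iteratedDeriv_eq_sum_smCoeff {U : Set ℂ} (hU : IsOpen U) (hU₀ : ∀ z ∈ U, z.im ≠ 0)
    (hf : DifferentiableOn ℂ f U) (n : ℕ) {z : ℂ} (hz : z ∈ U) :
    iteratedDeriv n f z = (2 * π * I) ^ n * ∑ r ∈ range (n + 1),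
      smCoeff (k : ℂ) n r * (negFourPiIm z ^ ((r : ℤ) - n) * smIter k f r z) := by
  induction n generalizing z with
  | zero => simp [smCoeff, smIter]
  | succ n ih =>
    have hdiff (r : ℕ) : DifferentiableAt ℝ (smIter k f r) z :=
      ((contDiffOn_smIter k f hU hU₀ hf r).differentiableOn (by simp)).differentiableAt
        (hU.mem_nhds hz)
    have hprod (r : ℕ) : DifferentiableAt ℝ
        (fun w => negFourPiIm w ^ ((r : ℤ) - n) * smIter k f r w) z :=
      (differentiableAt_negFourPiIm_zpow (hU₀ z hz) _).mul (hdiff r)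
    have hterm (r : ℕ) : DifferentiableAt ℝ
        (fun w => smCoeff (k : ℂ) n r * (negFourPiIm w ^ ((r : ℤ) - n) * smIter k f r w)) z :=
      (hprod r).const_mul _
    have hholo : DifferentiableAt ℂ (iteratedDeriv n f) z := by
      rw [iteratedDeriv_eq_iterate]
      exact ((hf.analyticOnNhd hU).iterated_deriv n z hz).differentiableAt
    have hev : iteratedDeriv n f =ᶠ[nhds z] fun w => (2 * π * I) ^ n * ∑ r ∈ range (n + 1),
        smCoeff (k : ℂ) n r * (negFourPiIm w ^ ((r : ℤ) - n) * smIter k f r w) :=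
      Filter.eventually_of_mem (hU.mem_nhds hz) fun w hw => ih hw
    rw [iteratedDeriv_succ, ← hholo.wirtingerDeriv_eq_deriv, hev.wirtingerDeriv_eq,
      wirtingerDeriv_const_mul _ (DifferentiableAt.fun_sum fun r _ => hterm r),
      wirtingerDeriv_sum fun r _ => hterm r, sum_smCoeff_succ, mul_sum, mul_sum]
    refine sum_congr rfl fun r _ => ?_
    rw [wirtingerDeriv_const_mul _ (hprod r), wirtingerDeriv_zpow_mul_smIter (hU₀ z hz) _ (hdiff r)]
    push_cast
    ring

end Inverse

theorem iteratedDeriv_eq_sum_smIter (k : ℤ) (f : ℂ → ℂ)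
    (hf : ∀ z : ℂ, 0 < z.im → DifferentiableAt ℂ f z)
    (n : ℕ) (z : ℂ) (hz : 0 < z.im) :
    iteratedDeriv n f z / (2 * (Real.pi : ℂ) * Complex.I) ^ n =
      ∑ r ∈ Finset.range (n + 1),
        (-1) ^ (n - r) * (n.choose r : ℂ) *
          ((ascPochhammer ℂ (n - r)).eval ((k : ℂ) + r) /
            (-4 * (Real.pi : ℂ) * (z.im : ℂ)) ^ (n - r)) *
          smIter k f r z := by
  rw [iteratedDeriv_eq_sum_smCoeff UpperHalfPlane.isOpen_upperHalfPlaneSet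
      (fun w (hw : 0 < w.im) => hw.ne')
      (fun w hw => (hf w hw).differentiableWithinAt) n hz,
    mul_div_cancel_left₀ _ (pow_ne_zero n two_pi_I_ne_zero)]
  refine sum_congr rfl fun r hr => ?_
  have hrn : r ≤ n := Nat.lt_succ_iff.mp (mem_range.mp hr)
  rw [show (r : ℤ) - n = -((n - r : ℕ) : ℤ) by omega, zpow_neg, zpow_natCast, smCoeff, negFourPiIm]
  ring
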